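/- arXiv:0704.1046 — 2 statements merged into one kernel-verified Lean document; each statement's English description precedes it below -/
import Mathlib

section
/- Let n, r ∈ ℕ with 1 ≤ r ≤ n, let N ∈ ℕ and C > 0. Let Ω = {z ∈ ℂⁿ : |z_k| < e^{-1} for all k, and z_k ≠ 0 for all k < r}. Let f : ℂⁿ → ℂ be real Fréchet differentiable at every point of Ω, and suppose that for every z ∈ Ω the following derivative bounds hold, where e_k denotes the k-th standard basis vector and Df(z) the real Fréchet derivative: for every k < r and for both directions v = e_k and v = i·e_k, ‖Df(z)(v)‖ ≤ C · (∏_{j<r} (log log(1/|z_j|))^N) / (|z_k| · log(1/|z_k|)); and for every k with r ≤ k < n and both directions v = e_k and v = i·e_k, ‖Df(z)(v)‖ ≤ C · ∏_{j<r} (log log(1/|z_j|))^N. Then for every ε ∈ (0,1) there exists a constant C' > 0 such that for every w ∈ Ω with |w_k| ≤ ε·e^{-1} for all k, one has |f(w)| ≤ C' · ∑_{i<r} (log log(1/|w_i|))^{N+1} · ∏_{i<j<r} (log log(1/|w_j|))^N. -/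
/-!
Fix `b = ε / e` and push the coordinates `w_0, …, w_{r-1}` one after the other radially out to
modulus `b`. Along the ray of `z_k` the derivative of `f` is at most a constant times
`ℓ(t)^N / (t log (1/t))` times the log-log factors of the other coordinates, and this weight
integrates from `|w_k|` to `b` to at most `ℓ(|w_k|)^(N+1) / (N+1)`; the coordinates already pushed
only contribute the constant `ℓ(b)^N`, while the later ones give the product over `j > k`.
After `r` steps the point lies in the compact set `{|z_j| = b for j < r, |z_j| ≤ b otherwise}` of
the punctured polydisc, where `f` is bounded by continuity, and that bound is absorbed because the
right-hand side is bounded below by a positive constant when all `|w_j| ≤ b`.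
Here `ℓ(t) = log (log (1/t))`.
-/

open Finset

def puncturedPolydisc (n r : ℕ) : Set (Fin n → ℂ) :=
  {z | (∀ k, ‖z k‖ < Real.exp (-1)) ∧ ∀ k : Fin n, (k : ℕ) < r → z k ≠ 0}

local notation "ℓ " t:max => Real.log (Real.log (1 / t))

namespace LogLogGrowth

open Real

lemma one_lt_log_one_div {t : ℝ} (ht : 0 < t) (ht' : t < exp (-1)) : 1 < log (1 / t) := by
  rw [one_div, log_inv, lt_neg]
  exact (log_lt_iff_lt_exp ht).2 ht'

lemma loglog_pos {t : ℝ} (ht : 0 < t) (ht' : t < exp (-1)) : 0 < ℓ t :=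
  log_pos (one_lt_log_one_div ht ht')

lemma loglog_le_loglog {s t : ℝ} (hs : 0 < s) (hst : s ≤ t) (ht : t < exp (-1)) :
    ℓ t ≤ ℓ s := by
  have ht0 : 0 < t := hs.trans_le hst
  gcongr
  exact zero_lt_one.trans (one_lt_log_one_div ht0 ht)

lemma hasDerivAt_loglog_pow (N : ℕ) {t : ℝ} (ht : 0 < t) (ht' : t < exp (-1)) :
    HasDerivAt (fun s => ℓ s ^ (N + 1)) (-((N + 1) * ℓ t ^ N / (t * log (1 / t)))) t := by
  have hlog : log (1 / t) ≠ 0 := (zero_lt_one.trans (one_lt_log_one_div ht ht')).ne'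
  have hinner : HasDerivAt (fun s : ℝ => log (1 / s)) (-t⁻¹) t := by
    have hfun : (fun s : ℝ => log (1 / s)) = fun s => -log s :=
      funext fun s => by rw [one_div, log_inv]
    rw [hfun]
    exact (hasDerivAt_log ht.ne').neg
  refine ((hinner.log hlog).pow (N + 1)).congr_deriv ?_
  push_cast
  field_simp

-- `-ℓ t ^ (N + 1) / (N + 1)` is an antiderivative of the weight `ℓ t ^ N / (t log (1 / t))`.
lemma norm_sub_le_of_norm_deriv_le_loglog {E : Type*} [NormedAddCommGroup E] [NormedSpace ℝ E]
    {g g' : ℝ → E} {a b K : ℝ} (N : ℕ) (ha : 0 < a) (hab : a ≤ b) (hb : b < exp (-1))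
    (hK : 0 ≤ K) (hg : ∀ t ∈ Set.Icc a b, HasDerivAt g (g' t) t)
    (hg' : ∀ t ∈ Set.Icc a b, ‖g' t‖ ≤ K * ℓ t ^ N / (t * log (1 / t))) :
    ‖g b - g a‖ ≤ K / (N + 1) * ℓ a ^ (N + 1) := by
  set B : ℝ → ℝ := fun t => K / (N + 1) * (ℓ a ^ (N + 1) - ℓ t ^ (N + 1))
  have hB : ∀ t ∈ Set.Icc a b, HasDerivAt B (K * ℓ t ^ N / (t * log (1 / t))) t := by
    intro t ht
    have ht0 := ha.trans_le ht.1
    refine (((hasDerivAt_loglog_pow N ht0 (ht.2.trans_lt hb)).const_sub _).const_mul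
      (K / (N + 1))).congr_deriv ?_
    field_simp
  have hfence := image_norm_le_of_norm_deriv_right_le_deriv_boundary'
    (f := fun t => g t - g a) (B := B)
    (fun t ht => ((hg t ht).continuousAt.sub continuousAt_const).continuousWithinAt)
    (fun t ht => ((hg t (Set.Ico_subset_Icc_self ht)).sub_const _).hasDerivWithinAt)
    (by simp [B]) (fun t ht => (hB t ht).continuousAt.continuousWithinAt)
    (fun t ht => (hB t (Set.Ico_subset_Icc_self ht)).hasDerivWithinAt)
    (fun t ht => hg' t (Set.Ico_subset_Icc_self ht)) (Set.right_mem_Icc.2 hab)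
  have hb0 : 0 ≤ ℓ b ^ (N + 1) := pow_nonneg (loglog_pos (ha.trans_le hab) hb).le _
  refine hfence.trans ?_
  simp only [B]
  gcongr
  linarith

lemma norm_apply_single_le {ι F : Type*} [DecidableEq ι] [NormedAddCommGroup F]
    [NormedSpace ℝ F] (A : (ι → ℂ) →L[ℝ] F) (k : ι) {u : ℂ} (hu : ‖u‖ ≤ 1) :
    ‖A (Pi.single k u)‖ ≤ ‖A (Pi.single k 1)‖ + ‖A (Pi.single k Complex.I)‖ := by
  have hsingle : (Pi.single k u : ι → ℂ) =
      u.re • (Pi.single k 1 : ι → ℂ) + u.im • (Pi.single k Complex.I : ι → ℂ) := by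
    ext j
    rcases eq_or_ne j k with rfl | hj
    · simp [Complex.real_smul, Complex.re_add_im]
    · simp [hj]
  have hre : |u.re| ≤ 1 := (Complex.abs_re_le_norm u).trans hu
  have him : |u.im| ≤ 1 := (Complex.abs_im_le_norm u).trans hu
  rw [hsingle, map_add, map_smul, map_smul]
  refine (norm_add_le _ _).trans (add_le_add ?_ ?_) <;> rw [norm_smul, Real.norm_eq_abs]
  · exact mul_le_of_le_one_left (norm_nonneg _) hre
  · exact mul_le_of_le_one_left (norm_nonneg _) him

lemma hasDerivAt_update_ofReal_mul {ι : Type*} [Fintype ι] [DecidableEq ι] (w : ι → ℂ) (k : ι)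
    (u : ℂ) (t : ℝ) :
    HasDerivAt (fun s : ℝ => Function.update w k ((s : ℂ) * u)) (Pi.single k u) t := by
  refine hasDerivAt_pi.2 fun j => ?_
  rcases eq_or_ne j k with rfl | hj
  · simpa using (hasDerivAt_id t).ofReal_comp.mul_const u
  · simpa [hj] using hasDerivAt_const t (w j)

lemma prod_comp_update {ι M α : Type*} [CommMonoid M] [DecidableEq ι] {s : Finset ι} {k : ι}
    (hk : k ∈ s) (g : α → M) (w : ι → α) (v : α) :
    ∏ j ∈ s, g (Function.update w k v j) = g v * ∏ j ∈ s \ {k}, g (w j) := by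
  rw [← prod_update_of_mem hk]
  exact prod_congr rfl fun j _ => Function.apply_update (fun _ => g) w k v j

lemma update_mem_puncturedPolydisc {n r : ℕ} {w : Fin n → ℂ} (hw : w ∈ puncturedPolydisc n r)
    (k : Fin n) {v : ℂ} (hv0 : v ≠ 0) (hv : ‖v‖ < exp (-1)) :
    Function.update w k v ∈ puncturedPolydisc n r := by
  refine ⟨fun j => ?_, fun j hj => ?_⟩ <;> rcases eq_or_ne j k with rfl | hjk
  · simpa using hv
  · simpa [hjk] using hw.1 j
  · simpa using hv0
  · simpa [hjk] using hw.2 j hj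

lemma loglog_norm_pos {n r : ℕ} {w : Fin n → ℂ} (hw : w ∈ puncturedPolydisc n r) {j : Fin n}
    (hj : (j : ℕ) < r) : 0 < ℓ ‖w j‖ :=
  loglog_pos (norm_pos_iff.2 (hw.2 j hj)) (hw.1 j)

lemma prod_loglog_nonneg {n r N : ℕ} {w : Fin n → ℂ} (hw : w ∈ puncturedPolydisc n r)
    {s : Finset (Fin n)} (hs : ∀ j ∈ s, (j : ℕ) < r) : 0 ≤ ∏ j ∈ s, ℓ ‖w j‖ ^ N :=
  prod_nonneg fun j hj => pow_nonneg (loglog_norm_pos hw (hs j hj)).le N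

def HasLogLogPartialBound (n r N : ℕ) (C : ℝ) (f : (Fin n → ℂ) → ℂ) (k : Fin n) : Prop :=
  ∀ z ∈ puncturedPolydisc n r, ∀ v : Fin n → ℂ, v = Pi.single k 1 ∨ v = Pi.single k Complex.I →
    ‖fderiv ℝ f z v‖ ≤
      C * (∏ j ∈ univ.filter (fun j : Fin n => (j : ℕ) < r), ℓ ‖z j‖ ^ N) /
        (‖z k‖ * log (1 / ‖z k‖))

lemma HasLogLogPartialBound.norm_fderiv_single_le {n r N : ℕ} {C : ℝ} {f : (Fin n → ℂ) → ℂ}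
    {k : Fin n} (hbound : HasLogLogPartialBound n r N C f k) {z : Fin n → ℂ}
    (hz : z ∈ puncturedPolydisc n r) {u : ℂ} (hu : ‖u‖ ≤ 1) :
    ‖fderiv ℝ f z (Pi.single k u)‖ ≤
      2 * (C * (∏ j ∈ univ.filter (fun j : Fin n => (j : ℕ) < r), ℓ ‖z j‖ ^ N) /
        (‖z k‖ * log (1 / ‖z k‖))) :=
  (norm_apply_single_le _ k hu).trans <| by
    linarith [hbound z hz _ (Or.inl rfl), hbound z hz _ (Or.inr rfl)]

theorem norm_sub_update_radial_le {n r N : ℕ} {C b : ℝ} {f : (Fin n → ℂ) → ℂ} (hC : 0 ≤ C)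
    (hdiff : ∀ z ∈ puncturedPolydisc n r, DifferentiableAt ℝ f z) {k : Fin n} (hk : (k : ℕ) < r)
    (hbound : HasLogLogPartialBound n r N C f k)
    (hb : b < exp (-1)) {w : Fin n → ℂ} (hw : w ∈ puncturedPolydisc n r) (hwk : ‖w k‖ ≤ b) :
    ‖f (Function.update w k (((b / ‖w k‖ : ℝ) : ℂ) * w k)) - f w‖ ≤
      2 * C / (N + 1) * (∏ j ∈ univ.filter (fun j : Fin n => (j : ℕ) < r) \ {k}, ℓ ‖w j‖ ^ N) *
        ℓ ‖w k‖ ^ (N + 1) := by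
  set a := ‖w k‖ with ha_def
  set P := ∏ j ∈ univ.filter (fun j : Fin n => (j : ℕ) < r) \ {k}, ℓ ‖w j‖ ^ N
  have ha : 0 < a := norm_pos_iff.2 (hw.2 k hk)
  have hP : 0 ≤ P := prod_loglog_nonneg hw fun j hj => (mem_filter.1 (mem_sdiff.1 hj).1).2
  set u : ℂ := ((a⁻¹ : ℝ) : ℂ) * w k
  have hu : ‖u‖ = 1 := by
    rw [norm_mul, Complex.norm_real, Real.norm_eq_abs, abs_inv, abs_of_pos ha, ← ha_def,
      inv_mul_cancel₀ ha.ne']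
  set z : ℝ → Fin n → ℂ := fun t => Function.update w k ((t : ℂ) * u)
  have hz_norm : ∀ t : ℝ, 0 ≤ t → ‖(t : ℂ) * u‖ = t := fun t ht => by
    rw [norm_mul, hu, mul_one, Complex.norm_real, Real.norm_of_nonneg ht]
  have hz_mem : ∀ t ∈ Set.Icc a b, z t ∈ puncturedPolydisc n r := fun t ht => by
    have ht0 : 0 < t := ha.trans_le ht.1
    refine update_mem_puncturedPolydisc hw k ?_ ((hz_norm t ht0.le).trans_lt (ht.2.trans_lt hb))
    rw [← norm_pos_iff, hz_norm t ht0.le]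
    exact ht0
  have hz_deriv : ∀ t ∈ Set.Icc a b,
      HasDerivAt (fun s => f (z s)) (fderiv ℝ f (z t) (Pi.single k u)) t := fun t ht =>
    (hdiff _ (hz_mem t ht)).hasFDerivAt.comp_hasDerivAt t (hasDerivAt_update_ofReal_mul w k u t)
  have hz_bound : ∀ t ∈ Set.Icc a b,
      ‖fderiv ℝ f (z t) (Pi.single k u)‖ ≤ 2 * C * P * ℓ t ^ N / (t * log (1 / t)) := by
    intro t ht
    have ht0 : 0 ≤ t := ha.le.trans ht.1
    have hprod : ∏ j ∈ univ.filter (fun j : Fin n => (j : ℕ) < r), ℓ ‖z t j‖ ^ N = ℓ t ^ N * P := by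
      rw [prod_comp_update (by simpa using hk) (fun v : ℂ => ℓ ‖v‖ ^ N), hz_norm t ht0]
    have h := hbound.norm_fderiv_single_le (hz_mem t ht) hu.le
    simp only [hprod, z, Function.update_self, hz_norm t ht0] at h
    exact h.trans_eq (by ring)
  have hza : z a = w := by
    simp only [z, u, ← mul_assoc, ← Complex.ofReal_mul, mul_inv_cancel₀ ha.ne',
      Complex.ofReal_one, one_mul, Function.update_eq_self]
  have hzb : z b = Function.update w k (((b / a : ℝ) : ℂ) * w k) := by
    simp only [z, u, ← mul_assoc, ← Complex.ofReal_mul, div_eq_mul_inv]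
  have key := norm_sub_le_of_norm_deriv_le_loglog N ha hwk hb (by positivity) hz_deriv hz_bound
  rw [hza, hzb] at key
  exact key.trans_eq (by ring)

lemma sum_range_eq_sum_filter_fin {M : Type*} [AddCommMonoid M] {r n : ℕ} (hrn : r ≤ n)
    (g : ℕ → M) : ∑ i ∈ range r, g i = ∑ i ∈ univ.filter (fun i : Fin n => (i : ℕ) < r), g i := by
  have hrange : range r = (univ.filter (fun i : Fin n => (i : ℕ) < r)).map Fin.valEmbedding := by
    ext m
    simp only [mem_range, mem_map, mem_filter, mem_univ, true_and, Fin.valEmbedding_apply]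
    exact ⟨fun hm => ⟨⟨m, hm.trans_le hrn⟩, hm, rfl⟩, fun ⟨i, hi, him⟩ => him ▸ hi⟩
  rw [hrange]
  exact sum_map _ _ _

noncomputable def pushToRadius {n : ℕ} (b : ℝ) (w : Fin n → ℂ) (m : ℕ) : Fin n → ℂ :=
  fun j => if (j : ℕ) < m then ((b / ‖w j‖ : ℝ) : ℂ) * w j else w j

def spherePiClosedBall (n r : ℕ) (b : ℝ) : Set (Fin n → ℂ) :=
  Set.univ.pi fun j => if (j : ℕ) < r then Metric.sphere 0 b else Metric.closedBall 0 b

section PushToRadius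

variable {n r N : ℕ} {b : ℝ} {w : Fin n → ℂ}

lemma pushToRadius_zero : pushToRadius b w 0 = w := by
  funext j
  simp [pushToRadius]

lemma pushToRadius_of_le {m : ℕ} {j : Fin n} (h : m ≤ j) : pushToRadius b w m j = w j := by
  simp [pushToRadius, not_lt.2 h]

lemma pushToRadius_succ (i : Fin n) :
    pushToRadius b w (i + 1) =
      Function.update (pushToRadius b w i) i (((b / ‖w i‖ : ℝ) : ℂ) * w i) := by
  funext j
  rcases eq_or_ne j i with rfl | hj
  · simp [pushToRadius]
  · have hji : (j : ℕ) < i + 1 ↔ (j : ℕ) < i := by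
      have := Fin.val_ne_of_ne hj
      omega
    simp [pushToRadius, hj, hji]

lemma norm_pushToRadius_of_lt {m : ℕ} {j : Fin n} (h : (j : ℕ) < m) (hb : 0 ≤ b) (hw : w j ≠ 0) :
    ‖pushToRadius b w m j‖ = b := by
  rw [pushToRadius, if_pos h, norm_mul, Complex.norm_real, Real.norm_of_nonneg (by positivity),
    div_mul_cancel₀ _ (norm_ne_zero_iff.2 hw)]

lemma pushToRadius_mem {m : ℕ} (hm : m ≤ r) (hw : w ∈ puncturedPolydisc n r) (hb0 : 0 < b)
    (hb : b < exp (-1)) : pushToRadius b w m ∈ puncturedPolydisc n r := by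
  refine ⟨fun j => ?_, fun j hj => ?_⟩ <;> by_cases hjm : (j : ℕ) < m
  · rw [norm_pushToRadius_of_lt hjm hb0.le (hw.2 j (hjm.trans_le hm))]
    exact hb
  · rw [pushToRadius_of_le (not_lt.1 hjm)]
    exact hw.1 j
  · rw [← norm_ne_zero_iff, norm_pushToRadius_of_lt hjm hb0.le (hw.2 j hj)]
    exact hb0.ne'
  · rw [pushToRadius_of_le (not_lt.1 hjm)]
    exact hw.2 j hj

lemma isCompact_spherePiClosedBall : IsCompact (spherePiClosedBall n r b) :=
  isCompact_univ_pi fun j => by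
    split_ifs
    exacts [isCompact_sphere _ _, isCompact_closedBall _ _]

lemma spherePiClosedBall_subset (hb0 : 0 < b) (hb : b < exp (-1)) :
    spherePiClosedBall n r b ⊆ puncturedPolydisc n r := by
  intro z hz
  have hzj : ∀ j : Fin n, ‖z j‖ ≤ b ∧ ((j : ℕ) < r → ‖z j‖ = b) := fun j => by
    have := hz j (Set.mem_univ j)
    dsimp only at this
    split_ifs at this with hj
    · exact ⟨(mem_sphere_zero_iff_norm.1 this).le, fun _ => mem_sphere_zero_iff_norm.1 this⟩
    · exact ⟨mem_closedBall_zero_iff.1 this, fun h => absurd h hj⟩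
  refine ⟨fun j => (hzj j).1.trans_lt hb, fun j hj h0 => ?_⟩
  have := (hzj j).2 hj
  rw [h0, norm_zero] at this
  exact hb0.ne this

lemma pushToRadius_mem_spherePiClosedBall (hw : w ∈ puncturedPolydisc n r) (hwb : ∀ j, ‖w j‖ ≤ b)
    (hb : 0 ≤ b) : pushToRadius b w r ∈ spherePiClosedBall n r b := by
  intro j _
  dsimp only
  split_ifs with hj
  · exact mem_sphere_zero_iff_norm.2 (norm_pushToRadius_of_lt hj hb (hw.2 j hj))
  · exact mem_closedBall_zero_iff.2 (by rw [pushToRadius_of_le (not_lt.1 hj)]; exact hwb j)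

lemma prod_loglog_pushToRadius_of_lt_le (hw : w ∈ puncturedPolydisc n r) (hb0 : 0 < b)
    (hb : b < exp (-1)) {i : Fin n} (hi : (i : ℕ) < r) :
    ∏ j ∈ univ.filter (fun j : Fin n => (j : ℕ) < i), ℓ ‖pushToRadius b w i j‖ ^ N ≤
      max 1 (ℓ b) ^ (N * n) := by
  set s := univ.filter (fun j : Fin n => (j : ℕ) < i)
  have hc := (loglog_pos hb0 hb).le
  calc _ = ∏ _j ∈ s, ℓ b ^ N :=
        prod_congr rfl fun j hj => by
          rw [norm_pushToRadius_of_lt (mem_filter.1 hj).2 hb0.le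
            (hw.2 j ((mem_filter.1 hj).2.trans hi))]
    _ = (ℓ b ^ N) ^ #s := prod_const _
    _ ≤ (max 1 (ℓ b) ^ N) ^ #s := by gcongr; exact le_max_right _ _
    _ ≤ (max 1 (ℓ b) ^ N) ^ n := pow_le_pow_right₀ (one_le_pow₀ (le_max_left _ _))
        (card_le_univ _ |>.trans_eq (Fintype.card_fin n))
    _ = _ := (pow_mul _ _ _).symm

lemma prod_loglog_pushToRadius_le (hw : w ∈ puncturedPolydisc n r) (hb0 : 0 < b)
    (hb : b < exp (-1)) {i : Fin n} (hi : (i : ℕ) < r) :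
    ∏ j ∈ univ.filter (fun j : Fin n => (j : ℕ) < r) \ {i}, ℓ ‖pushToRadius b w i j‖ ^ N ≤
      max 1 (ℓ b) ^ (N * n) *
        ∏ j ∈ univ.filter (fun j : Fin n => (i : ℕ) < (j : ℕ) ∧ (j : ℕ) < r), ℓ ‖w j‖ ^ N := by
  set s := univ.filter (fun j : Fin n => (j : ℕ) < r) \ {i}
  rw [← prod_filter_mul_prod_filter_not s (fun j : Fin n => (j : ℕ) < i)]
  have hlow : s.filter (fun j : Fin n => (j : ℕ) < i) =
      univ.filter (fun j : Fin n => (j : ℕ) < i) := by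
    ext j
    simp only [s, mem_filter, mem_sdiff, mem_univ, mem_singleton, true_and, Fin.ext_iff]
    omega
  have hhigh : s.filter (fun j : Fin n => ¬(j : ℕ) < i) =
      univ.filter (fun j : Fin n => (i : ℕ) < (j : ℕ) ∧ (j : ℕ) < r) := by
    ext j
    simp only [s, mem_filter, mem_sdiff, mem_univ, mem_singleton, true_and, Fin.ext_iff]
    omega
  have hunpushed : ∏ j ∈ univ.filter (fun j : Fin n => (i : ℕ) < (j : ℕ) ∧ (j : ℕ) < r),
      ℓ ‖pushToRadius b w i j‖ ^ N =
        ∏ j ∈ univ.filter (fun j : Fin n => (i : ℕ) < (j : ℕ) ∧ (j : ℕ) < r), ℓ ‖w j‖ ^ N :=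
    prod_congr rfl fun j hj => by rw [pushToRadius_of_le (mem_filter.1 hj).2.1.le]
  rw [hlow, hhigh, hunpushed]
  exact mul_le_mul_of_nonneg_right (prod_loglog_pushToRadius_of_lt_le hw hb0 hb hi)
    (prod_loglog_nonneg hw fun j hj => (mem_filter.1 hj).2.2)

lemma norm_sub_pushToRadius_succ_le {C : ℝ} {f : (Fin n → ℂ) → ℂ} (hC : 0 ≤ C)
    (hdiff : ∀ z ∈ puncturedPolydisc n r, DifferentiableAt ℝ f z)
    (hbound : ∀ k : Fin n, (k : ℕ) < r → HasLogLogPartialBound n r N C f k)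
    (hw : w ∈ puncturedPolydisc n r) (hwb : ∀ j, ‖w j‖ ≤ b) (hb0 : 0 < b) (hb : b < exp (-1))
    {i : Fin n} (hi : (i : ℕ) < r) :
    ‖f (pushToRadius b w (i + 1)) - f (pushToRadius b w i)‖ ≤
      2 * C / (N + 1) * max 1 (ℓ b) ^ (N * n) * (ℓ ‖w i‖ ^ (N + 1) *
        ∏ j ∈ univ.filter (fun j : Fin n => (i : ℕ) < (j : ℕ) ∧ (j : ℕ) < r), ℓ ‖w j‖ ^ N) := by
  have hstep := norm_sub_update_radial_le hC hdiff hi (hbound i hi) hb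
    (pushToRadius_mem hi.le hw hb0 hb) (by rw [pushToRadius_of_le le_rfl]; exact hwb i)
  rw [pushToRadius_of_le le_rfl, ← pushToRadius_succ] at hstep
  refine hstep.trans ?_
  have hi_pos := (loglog_norm_pos hw hi).le
  calc _ ≤ 2 * C / (N + 1) * (max 1 (ℓ b) ^ (N * n) *
        ∏ j ∈ univ.filter (fun j : Fin n => (i : ℕ) < (j : ℕ) ∧ (j : ℕ) < r), ℓ ‖w j‖ ^ N) *
          ℓ ‖w i‖ ^ (N + 1) := by
        gcongr
        exact prod_loglog_pushToRadius_le hw hb0 hb hi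
    _ = _ := by ring

lemma norm_sub_pushToRadius_le {C : ℝ} {f : (Fin n → ℂ) → ℂ} (hrn : r ≤ n) (hC : 0 ≤ C)
    (hdiff : ∀ z ∈ puncturedPolydisc n r, DifferentiableAt ℝ f z)
    (hbound : ∀ k : Fin n, (k : ℕ) < r → HasLogLogPartialBound n r N C f k)
    (hw : w ∈ puncturedPolydisc n r) (hwb : ∀ j, ‖w j‖ ≤ b) (hb0 : 0 < b) (hb : b < exp (-1)) :
    ‖f (pushToRadius b w r) - f w‖ ≤
      2 * C / (N + 1) * max 1 (ℓ b) ^ (N * n) *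
        ∑ i ∈ univ.filter (fun i : Fin n => (i : ℕ) < r), ℓ ‖w i‖ ^ (N + 1) *
          ∏ j ∈ univ.filter (fun j : Fin n => (i : ℕ) < (j : ℕ) ∧ (j : ℕ) < r), ℓ ‖w j‖ ^ N := by
  set p := pushToRadius b w
  calc ‖f (p r) - f w‖ = ‖∑ i ∈ range r, (f (p (i + 1)) - f (p i))‖ := by
        rw [sum_range_sub (fun m => f (p m)), show p 0 = w from pushToRadius_zero]
    _ ≤ ∑ i ∈ range r, ‖f (p (i + 1)) - f (p i)‖ := norm_sum_le _ _
    _ = ∑ i ∈ univ.filter (fun i : Fin n => (i : ℕ) < r), ‖f (p (i + 1)) - f (p i)‖ :=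
        sum_range_eq_sum_filter_fin hrn (fun m => ‖f (p (m + 1)) - f (p m)‖)
    _ ≤ _ := by
        rw [mul_sum]
        exact sum_le_sum fun i hi =>
          norm_sub_pushToRadius_succ_le hC hdiff hbound hw hwb hb0 hb (mem_filter.1 hi).2

end PushToRadius

lemma exists_pos_le_sum_loglog {n r : ℕ} (N : ℕ) (hr : 1 ≤ r) (hrn : r ≤ n) {b : ℝ} (hb0 : 0 < b)
    (hb : b < exp (-1)) :
    ∃ δ > 0, ∀ w ∈ puncturedPolydisc n r, (∀ j, ‖w j‖ ≤ b) →
      δ ≤ ∑ i ∈ univ.filter (fun i : Fin n => (i : ℕ) < r), ℓ ‖w i‖ ^ (N + 1) *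
        ∏ j ∈ univ.filter (fun j : Fin n => (i : ℕ) < (j : ℕ) ∧ (j : ℕ) < r), ℓ ‖w j‖ ^ N := by
  set i₀ : Fin n := ⟨0, Nat.lt_of_lt_of_le hr hrn⟩
  have hc := loglog_pos hb0 hb
  refine ⟨ℓ b ^ (N + 1) *
      ∏ j ∈ univ.filter (fun j : Fin n => (i₀ : ℕ) < (j : ℕ) ∧ (j : ℕ) < r), ℓ b ^ N,
    by positivity, fun w hw hwb => ?_⟩
  have hlow : ∀ j : Fin n, (j : ℕ) < r → ℓ b ≤ ℓ ‖w j‖ := fun j hj =>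
    loglog_le_loglog (norm_pos_iff.2 (hw.2 j hj)) (hwb j) hb
  refine le_trans ?_ (single_le_sum (fun i hi => ?_) (mem_filter.2 ⟨mem_univ i₀, hr⟩))
  · exact mul_le_mul (pow_le_pow_left₀ hc.le (hlow i₀ hr) _)
      (prod_le_prod (fun _ _ => by positivity) fun j hj =>
        pow_le_pow_left₀ hc.le (hlow j (mem_filter.1 hj).2.2) _)
      (by positivity) (pow_nonneg (loglog_norm_pos hw (j := i₀) hr).le _)
  · have hi := (mem_filter.1 hi).2
    exact mul_nonneg (pow_nonneg (loglog_norm_pos hw hi).le _)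
      (prod_loglog_nonneg hw fun j hj => (mem_filter.1 hj).2.2)

end LogLogGrowth

open LogLogGrowth in
theorem loglog_growth_of_differential_general
    (n r : ℕ) (hr1 : 1 ≤ r) (hrn : r ≤ n) (N : ℕ) (C : ℝ) (hC : 0 < C)
    (f : (Fin n → ℂ) → ℂ)
    (hdiff : ∀ z ∈ puncturedPolydisc n r, DifferentiableAt ℝ f z)
    (hbound₁ : ∀ z ∈ puncturedPolydisc n r, ∀ k : Fin n, (k : ℕ) < r →
      ∀ v : Fin n → ℂ, v = Pi.single k 1 ∨ v = Pi.single k Complex.I →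
        ‖fderiv ℝ f z v‖ ≤
          C * (∏ j ∈ univ.filter (fun j : Fin n => (j : ℕ) < r),
                (Real.log (Real.log (1 / ‖z j‖))) ^ N) /
            (‖z k‖ * Real.log (1 / ‖z k‖))) :
    ∀ ε : ℝ, 0 < ε → ε < 1 → ∃ C' : ℝ, 0 < C' ∧
      ∀ w ∈ puncturedPolydisc n r, (∀ k, ‖w k‖ ≤ ε * Real.exp (-1)) →
        ‖f w‖ ≤
          C' * ∑ i ∈ univ.filter (fun i : Fin n => (i : ℕ) < r),
            (Real.log (Real.log (1 / ‖w i‖))) ^ (N + 1) *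
              ∏ j ∈ univ.filter (fun j : Fin n => (i : ℕ) < (j : ℕ) ∧ (j : ℕ) < r),
                (Real.log (Real.log (1 / ‖w j‖))) ^ N := by
  intro ε hε0 hε1
  set b := ε * Real.exp (-1)
  have hb0 : 0 < b := by positivity
  have hb : b < Real.exp (-1) := mul_lt_of_lt_one_left (Real.exp_pos _) hε1
  have hcont : ContinuousOn f (spherePiClosedBall n r b) := fun z hz =>
    (hdiff z (spherePiClosedBall_subset hb0 hb hz)).continuousAt.continuousWithinAt
  obtain ⟨M, hM⟩ := isCompact_spherePiClosedBall.exists_bound_of_continuousOn hcont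
  obtain ⟨δ, hδ, hδS⟩ := exists_pos_le_sum_loglog N hr1 hrn hb0 hb
  set K := 2 * C / (N + 1) * max 1 (ℓ b) ^ (N * n)
  refine ⟨max M 0 / δ + K, by positivity, fun w hw hwb => ?_⟩
  have hsphere := hM _ (pushToRadius_mem_spherePiClosedBall hw hwb hb0.le)
  have hpush := norm_sub_pushToRadius_le hrn hC.le hdiff (fun k hk z hz => hbound₁ z hz k hk)
    hw hwb hb0 hb
  have hS := hδS w hw hwb
  calc ‖f w‖ ≤ ‖f (pushToRadius b w r)‖ + ‖f (pushToRadius b w r) - f w‖ :=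
        norm_le_norm_add_norm_sub _ _
    _ ≤ max M 0 / δ * δ + K * _ := by
        rw [div_mul_cancel₀ _ hδ.ne']
        exact add_le_add (hsphere.trans (le_max_left _ _)) hpush
    _ ≤ _ := by
        rw [add_mul]
        gcongr

/-- If the real differential of `f` has log-log growth along the normal crossings
divisor `z_1 ⋯ z_r = 0`, then `f` itself has log-log growth, with explicit exponent
`N+1` in the variable being integrated. -/
theorem loglog_growth_of_differential
    (n r : ℕ) (hr1 : 1 ≤ r) (hrn : r ≤ n) (N : ℕ) (C : ℝ) (hC : 0 < C)
    (f : (Fin n → ℂ) → ℂ)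
    (hdiff : ∀ z ∈ puncturedPolydisc n r, DifferentiableAt ℝ f z)
    (hbound₁ : ∀ z ∈ puncturedPolydisc n r, ∀ k : Fin n, (k : ℕ) < r →
      ∀ v : Fin n → ℂ, v = Pi.single k 1 ∨ v = Pi.single k Complex.I →
        ‖fderiv ℝ f z v‖ ≤
          C * (∏ j ∈ univ.filter (fun j : Fin n => (j : ℕ) < r),
                (Real.log (Real.log (1 / ‖z j‖))) ^ N) /
            (‖z k‖ * Real.log (1 / ‖z k‖)))
    (hbound₂ : ∀ z ∈ puncturedPolydisc n r, ∀ k : Fin n, r ≤ (k : ℕ) →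
      ∀ v : Fin n → ℂ, v = Pi.single k 1 ∨ v = Pi.single k Complex.I →
        ‖fderiv ℝ f z v‖ ≤
          C * ∏ j ∈ univ.filter (fun j : Fin n => (j : ℕ) < r),
                (Real.log (Real.log (1 / ‖z j‖))) ^ N) :
    ∀ ε : ℝ, 0 < ε → ε < 1 → ∃ C' : ℝ, 0 < C' ∧
      ∀ w ∈ puncturedPolydisc n r, (∀ k, ‖w k‖ ≤ ε * Real.exp (-1)) →
        ‖f w‖ ≤
          C' * ∑ i ∈ univ.filter (fun i : Fin n => (i : ℕ) < r),
            (Real.log (Real.log (1 / ‖w i‖))) ^ (N + 1) *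
              ∏ j ∈ univ.filter (fun j : Fin n => (i : ℕ) < (j : ℕ) ∧ (j : ℕ) < r),
                (Real.log (Real.log (1 / ‖w j‖))) ^ N :=
  loglog_growth_of_differential_general n r hr1 hrn N C hC f hdiff hbound₁
end

section
/- Let (α, μ) be a measure space with μ a probability measure, let K be a natural number, and let g : α → ℝ be μ-integrable with g(x) ≥ e^e for μ-almost every x. Then ∫ (log g(x))^K dμ(x) ≤ (2K+2)^K · (log(∫ g dμ))^K. -/
open MeasureTheory Real

/-! Writing `u = log g` and `m = log ∫ g`, one has pointwise `u^K ≤ (2Km)^K + (2K)^K e^{u - Km}`: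
either `u ≤ 2Km`, or `u/2 ≥ Km` and `u^K ≤ (2K)^K e^{u/2}`. Integrating, the second term
contributes `(2K)^K e^{(1-K)m} ≤ (2K)^K m^K`, and Bernoulli's inequality gives
`2 (2K)^K ≤ (2K+2)^K`. -/

lemma pow_le_two_mul_pow_mul_exp_half {u : ℝ} (hu : 0 ≤ u) (n : ℕ) :
    u ^ n ≤ (2 * n) ^ n * exp (u / 2) := by
  have hfact : (u / 2) ^ n ≤ n.factorial * exp (u / 2) :=
    (div_le_iff₀' (by positivity)).1 (pow_div_factorial_le_exp (u / 2) (by positivity) n)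
  have hpow : (n.factorial : ℝ) ≤ (n : ℝ) ^ n := by exact_mod_cast Nat.factorial_le_pow n
  calc u ^ n = 2 ^ n * (u / 2) ^ n := by rw [← mul_pow]; ring_nf
    _ ≤ 2 ^ n * (n ^ n * exp (u / 2)) := by gcongr; exact hfact.trans (by gcongr)
    _ = (2 * n) ^ n * exp (u / 2) := by rw [mul_pow, mul_assoc]

lemma pow_le_pow_add_mul_exp_sub {u m : ℝ} (hu : 0 ≤ u) (hm : 0 ≤ m) (n : ℕ) :
    u ^ n ≤ (2 * n * m) ^ n + (2 * n) ^ n * exp (u - n * m) := by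
  rcases le_or_gt u (2 * n * m) with h | h
  · have : 0 ≤ (2 * n : ℝ) ^ n * exp (u - n * m) := by positivity
    linarith [pow_le_pow_left₀ hu h n]
  · have : 0 ≤ (2 * n * m) ^ n := by positivity
    calc u ^ n ≤ (2 * n) ^ n * exp (u / 2) := pow_le_two_mul_pow_mul_exp_half hu n
      _ ≤ (2 * n) ^ n * exp (u - n * m) := by gcongr; linarith
      _ ≤ _ := le_add_of_nonneg_left this

lemma two_mul_pow_le_add_two_pow {n : ℕ} (hn : 1 ≤ n) : 2 * (2 * n) ^ n ≤ (2 * n + 2) ^ n := by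
  have h := pow_add_mul_le_add_pow (a := 2 * n) (b := 2) (Nat.zero_le _) (Nat.zero_le _) n
  obtain ⟨k, rfl⟩ := Nat.exists_eq_add_of_le' hn
  calc 2 * (2 * (k + 1)) ^ (k + 1)
      = (2 * (k + 1)) ^ (k + 1) + (k + 1) * (2 * (k + 1)) ^ k * 2 := by ring
    _ ≤ _ := by simpa using h

section Integral

variable {α : Type*} [MeasurableSpace α] {μ : Measure α} {g : α → ℝ}

lemma MeasureTheory.Integrable.log_pow [IsFiniteMeasure μ] (hg : Integrable g μ)
    (hg1 : ∀ᵐ x ∂μ, 1 ≤ g x) (n : ℕ) : Integrable (fun x ↦ log (g x) ^ n) μ := by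
  refine (hg.const_mul ((2 * n : ℝ) ^ n)).mono'
    ((measurable_log.comp_aemeasurable hg.aemeasurable).pow_const n).aestronglyMeasurable ?_
  filter_upwards [hg1] with x hx
  have hlog : 0 ≤ log (g x) := log_nonneg hx
  rw [norm_of_nonneg (pow_nonneg hlog n)]
  calc log (g x) ^ n ≤ (2 * n) ^ n * exp (log (g x) / 2) := pow_le_two_mul_pow_mul_exp_half hlog n
    _ ≤ (2 * n) ^ n * exp (log (g x)) := by gcongr; linarith
    _ = (2 * n) ^ n * g x := by rw [exp_log (zero_lt_one.trans_le hx)]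

lemma integral_log_pow_le_add [IsProbabilityMeasure μ] (hg : Integrable g μ)
    (hg1 : ∀ᵐ x ∂μ, 1 ≤ g x) {m : ℝ} (hm : 0 ≤ m) (n : ℕ) :
    ∫ x, log (g x) ^ n ∂μ ≤ (2 * n * m) ^ n + (2 * n) ^ n * exp (-(n * m)) * ∫ x, g x ∂μ := by
  have hbound : ∀ᵐ x ∂μ,
      log (g x) ^ n ≤ (2 * n * m) ^ n + (2 * n) ^ n * exp (-(n * m)) * g x := by
    filter_upwards [hg1] with x hx
    have h := pow_le_pow_add_mul_exp_sub (log_nonneg hx) hm n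
    rwa [sub_eq_neg_add, exp_add, exp_log (zero_lt_one.trans_le hx), ← mul_assoc] at h
  calc ∫ x, log (g x) ^ n ∂μ
      ≤ ∫ x, ((2 * n * m) ^ n + (2 * n) ^ n * exp (-(n * m)) * g x) ∂μ :=
        integral_mono_ae (hg.log_pow hg1 n) ((integrable_const _).add (hg.const_mul _)) hbound
    _ = _ := by
        rw [integral_add (integrable_const _) (hg.const_mul _), integral_const, integral_const_mul]
        simp

end Integral

/-- Jensen-inequality step concluding the height-integral bound: for a probability
measure `μ` and integrable `g ≥ e^e` a.e., one has
`∫ (log g)^K dμ ≤ (2K+2)^K (log ∫ g dμ)^K`. -/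
theorem integral_log_pow_le {α : Type*} [MeasurableSpace α]
    (μ : Measure α) [IsProbabilityMeasure μ] (K : ℕ)
    (g : α → ℝ) (hg : Integrable g μ)
    (hge : ∀ᵐ x ∂μ, Real.exp (Real.exp 1) ≤ g x) :
    ∫ x, (Real.log (g x)) ^ K ∂μ ≤
      ((2 * K + 2 : ℝ)) ^ K * (Real.log (∫ x, g x ∂μ)) ^ K := by
  rcases Nat.eq_zero_or_pos K with rfl | hK
  · simp
  have hee : 1 ≤ exp (exp 1) := one_le_exp (exp_pos 1).le
  have hI : exp (exp 1) ≤ ∫ x, g x ∂μ := by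
    simpa using integral_mono_ae (integrable_const _) hg hge
  have hIpos : 0 < ∫ x, g x ∂μ := (exp_pos _).trans_le hI
  set m := log (∫ x, g x ∂μ)
  have hm : 1 ≤ m := by
    have : exp 1 ≤ m := by simpa using log_le_log (exp_pos _) hI
    linarith [one_le_exp zero_le_one]
  have htail : exp (-(K * m)) * ∫ x, g x ∂μ ≤ m ^ K := by
    rw [← exp_log hIpos, ← exp_add]
    exact (exp_le_one_iff.2 (by nlinarith [(Nat.one_le_cast (α := ℝ)).2 hK])).trans
      (one_le_pow₀ hm)
  have hbern : 2 * (2 * K : ℝ) ^ K ≤ (2 * K + 2) ^ K := by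
    exact_mod_cast two_mul_pow_le_add_two_pow hK
  calc ∫ x, log (g x) ^ K ∂μ
      ≤ (2 * K * m) ^ K + (2 * K) ^ K * exp (-(K * m)) * ∫ x, g x ∂μ :=
        integral_log_pow_le_add hg (hge.mono fun x hx ↦ hee.trans hx) (zero_le_one.trans hm) K
    _ ≤ (2 * K) ^ K * m ^ K + (2 * K) ^ K * m ^ K := by
        rw [mul_pow, mul_assoc]; gcongr
    _ = 2 * (2 * K) ^ K * m ^ K := by ring
    _ ≤ (2 * K + 2) ^ K * m ^ K := mul_le_mul_of_nonneg_right hbern (by positivity)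
end
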